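/- Let Φ(x) = x_1 − Σ_{i=2}^q x_i² and suppose the affine matrix function θ : ℝ^p → ℝ^{p×p} (symmetric values) satisfies ∇Φ(x) θ(x) = 0 for all x on the parabola {x : x_1 = Σ_{i=2}^q x_i²}. Then writing θ in block form with respect to ℝ^q × ℝ^{p-q}, the upper-left q×q block equals c ζ(x) for some c ≥ 0⁺ (c ∈ ℝ with c ζ positive semidefinite on {Φ ≥ 0} forcing c ≥ 0), and the off-diagonal block equals ζ(x)A_1 + η(x)A_2 for some constant matrices A_1, A_2. -/

import Mathlib

open Matrix

/-- `T_{ij}(y) ∈ ℝⁿ` with `i`-th entry `yⱼ`, `j`-th entry `-yᵢ`, zero elsewhere. -/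
noncomputable def Tvec (n : ℕ) (i j : Fin n) (y : Fin n → ℝ) : Fin n → ℝ :=
  fun k => if k = i then y j else if k = j then -(y i) else 0

/-- `η(y)` : first row zero, columns `T_{ij}(y)` for `i < j`. -/
noncomputable def etaMat (n : ℕ) (y : Fin n → ℝ) :
    Matrix (Unit ⊕ Fin n) {ij : Fin n × Fin n // ij.1 < ij.2} ℝ :=
  Matrix.of fun r c => Sum.elim (fun _ => 0) (fun k => Tvec n c.1.1 c.1.2 y k) r

/-- The parabolic boundary matrix `ζ(x) = [[4x₁, 2yᵀ],[2y, Id]]`. -/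
noncomputable def zetaMat (n : ℕ) (x1 : ℝ) (y : Fin n → ℝ) :
    Matrix (Unit ⊕ Fin n) (Unit ⊕ Fin n) ℝ :=
  Matrix.of fun r c =>
    match r, c with
    | Sum.inl _, Sum.inl _ => 4 * x1
    | Sum.inl _, Sum.inr j => 2 * y j
    | Sum.inr j, Sum.inl _ => 2 * y j
    | Sum.inr j, Sum.inr k => if j = k then 1 else 0

/-!
Substituting `x₁ = |y|²` into the row identity `∇Φ(x) θ(x) = 0` gives, column by column, a cubic
polynomial identity in `(y, z)`. Comparing coefficients shows that the constant and `z`-parts of the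
first `q` rows vanish, that the `x₁`-coefficient vanishes on the `y`-rows, that the `y`-coefficients
of the `x₁`-row are twice the constant `y`-rows, and that on the `y`-rows the `y`-coefficients are
antisymmetric up to half the `x₁`-coefficient on the diagonal. Together with the symmetry of all
coefficient matrices this forces the upper-left block to be `c ζ(x)` (a tensor antisymmetric in two
indices and symmetric in two others vanishes), while the antisymmetric `y`-coefficients left in the
`z`-columns are exactly what `η(y) A₂` can represent. Finally `c ≥ 0` because `4c` is the
`(x₁, x₁)` entry of `θ` at the interior point `(1, 0, 0)`.
-/

open Finset

theorem coeffs_eq_of_parabola_identity {ι κ : Type*} [Fintype ι] [DecidableEq ι] [Fintype κ]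
    [DecidableEq κ] {a₀ a : ℝ} {u c d : ι → ℝ} {w : κ → ℝ} {e : ι → ι → ℝ} {f : κ → ι → ℝ}
    (h : ∀ (y : ι → ℝ) (z : κ → ℝ),
      a₀ + (∑ j, y j ^ 2) * a + ∑ j, y j * u j + ∑ k, z k * w k =
        2 * ∑ j, y j * (c j + (∑ l, y l ^ 2) * d j + ∑ l, y l * e l j + ∑ k, z k * f k j)) :
    a₀ = 0 ∧ (∀ k, w k = 0) ∧ (∀ j, u j = 2 * c j) ∧ (∀ j, d j = 0) ∧ (∀ k j, f k j = 0) ∧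
      ∀ j l, e l j + e j l = if j = l then a else 0 := by
  have h₀ : a₀ = 0 := by simpa using h 0 0
  have hw : ∀ k, w k = 0 := fun k => by simpa [h₀, Pi.single_apply] using h 0 (Pi.single k 1)
  have hline : ∀ j s, s ^ 2 * a + s * u j = 2 * (s * (c j + s ^ 2 * d j + s * e j j)) :=
    fun j s => by simpa [h₀, Pi.single_apply] using h (Pi.single j s) 0
  have haxis : ∀ j, u j = 2 * c j ∧ d j = 0 ∧ a = 2 * e j j := fun j => by
    have h₁ := hline j 1
    have h₂ := hline j (-1)
    have h₃ := hline j 2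
    exact ⟨by linarith, by linarith, by linarith⟩
  have hf : ∀ k j, f k j = 0 := fun k j => by
    have hjk : a + u j + w k = 2 * (c j + d j + e j j + f k j) := by
      simpa [h₀, Pi.single_apply] using h (Pi.single j 1) (Pi.single k 1)
    linarith [haxis j, hw k]
  have hoff : ∀ j l, j ≠ l → e l j + e j l = 0 := fun j l hjl => by
    have hjl' := h (Pi.single j 1 + Pi.single l 1) 0
    simp only [h₀, Pi.add_apply, Pi.single_apply, add_sq, ite_pow, one_pow, ne_eq,
      OfNat.ofNat_ne_zero, not_false_eq_true, zero_pow, mul_ite, mul_one, mul_zero, sum_add_distrib,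
      sum_ite_eq', mem_univ, ↓reduceIte, hjl.symm, add_zero, add_mul, one_mul, zero_add, ite_mul,
      zero_mul, Pi.zero_apply, sum_const_zero, mul_add] at hjl'
    linarith [haxis j, haxis l]
  refine ⟨h₀, hw, fun j => (haxis j).1, fun j => (haxis j).2.1, hf, fun j l => ?_⟩
  split_ifs with hjl
  · subst hjl
    linarith [haxis j]
  · exact hoff j l hjl

theorem Matrix.isSymm_of_isSymm_affine {I ι R : Type*} [Fintype ι] [DecidableEq ι] [Ring R]
    {A₀ : Matrix I I R} {A : ι → Matrix I I R} (h : ∀ x : ι → R, (A₀ + ∑ i, x i • A i).IsSymm) :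
    A₀.IsSymm ∧ ∀ i, (A i).IsSymm := by
  have h₀ : A₀.IsSymm := by simpa using h 0
  refine ⟨h₀, fun i => ?_⟩
  have hi := h (Pi.single i 1)
  simp only [Pi.single_apply, ite_smul, one_smul, zero_smul, sum_ite_eq', mem_univ, if_true] at hi
  simpa using hi.sub h₀

theorem eq_zero_of_antisymm_of_symm {ι G : Type*} [AddGroup G] [IsAddTorsionFree G]
    {S : ι → ι → ι → G} (hanti : ∀ a b c, S a b c = -S b a c) (hsymm : ∀ a b c, S a b c = S a c b)
    (a b c : ι) : S a b c = 0 := by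
  refine self_eq_neg.mp ?_
  calc S a b c = -S b a c := hanti ..
    _ = -S b c a := by rw [hsymm]
    _ = S c b a := by rw [hanti, neg_neg]
    _ = S c a b := hsymm ..
    _ = -S a c b := hanti ..
    _ = -S a b c := by rw [hsymm]

theorem zetaMat_mul_apply_inl {n : ℕ} {κ : Type*} (x₁ : ℝ) (y : Fin n → ℝ)
    (B : Matrix (Unit ⊕ Fin n) κ ℝ) (k : κ) :
    (zetaMat n x₁ y * B) (Sum.inl ()) k =
      4 * x₁ * B (Sum.inl ()) k + ∑ j, 2 * y j * B (Sum.inr j) k := by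
  simp [mul_apply, zetaMat, Fintype.sum_sum_type]

theorem zetaMat_mul_apply_inr {n : ℕ} {κ : Type*} (x₁ : ℝ) (y : Fin n → ℝ)
    (B : Matrix (Unit ⊕ Fin n) κ ℝ) (j : Fin n) (k : κ) :
    (zetaMat n x₁ y * B) (Sum.inr j) k = 2 * y j * B (Sum.inl ()) k + B (Sum.inr j) k := by
  simp [mul_apply, zetaMat, Fintype.sum_sum_type]

theorem etaMat_mul_apply_inl {n : ℕ} {κ : Type*} (y : Fin n → ℝ)
    (B : Matrix {ij : Fin n × Fin n // ij.1 < ij.2} κ ℝ) (k : κ) :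
    (etaMat n y * B) (Sum.inl ()) k = 0 := by
  simp [mul_apply, etaMat]

theorem etaMat_mul_apply_inr {n : ℕ} {κ : Type*} (y : Fin n → ℝ) (g : Fin n → Fin n → κ → ℝ)
    (hg : ∀ a b k, a ≠ b → g a b k = -g b a k) (j : Fin n) (k : κ) :
    (etaMat n y *
        (of fun p k => g p.1.2 p.1.1 k : Matrix {ij : Fin n × Fin n // ij.1 < ij.2} κ ℝ))
      (Sum.inr j) k = ∑ l, y l * g l j k - y j * g j j k := by
  have hsplit : ∀ a b : Fin n, (if a < b then Tvec n a b y j * g b a k else 0) =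
      (if a = j ∧ j < b then y b * g b j k else 0) +
        (if b = j ∧ a < j then y a * g a j k else 0) := by
    intro a b
    unfold Tvec
    have := hg b a k
    split_ifs <;> grind
  have hpairs :
      ∑ p : {ij : Fin n × Fin n // ij.1 < ij.2}, Tvec n p.1.1 p.1.2 y j * g p.1.2 p.1.1 k =
        ∑ a, ∑ b, if a < b then Tvec n a b y j * g b a k else 0 := by
    rw [← Fintype.sum_prod_type', ← sum_filter, ← sum_subtype_eq_sum_filter, subtype_univ]
  have hdiag : y j * g j j k = ∑ l, if l = j then y l * g l j k else 0 := by simp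
  simp only [mul_apply, etaMat, of_apply, Sum.elim_inr]
  rw [hpairs]
  simp only [hsplit, sum_add_distrib, ite_and, sum_ite_irrel, sum_ite_eq', mem_univ, if_true,
    sum_const_zero]
  rw [← sum_add_distrib, hdiag, ← sum_sub_distrib]
  refine sum_congr rfl fun l _ => ?_
  grind

local notation "𝐭" => Sum.inl (Sum.inl ())
local notation "𝐲" j:max => Sum.inl (Sum.inr j)
local notation "𝐳" k:max => Sum.inr k

section Coordinates

variable {ι κ : Type*}

theorem affine_apply_coords [Fintype ι] [Fintype κ]
    (A₀ : Matrix ((Unit ⊕ ι) ⊕ κ) ((Unit ⊕ ι) ⊕ κ) ℝ)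
    (A : (Unit ⊕ ι) ⊕ κ → Matrix ((Unit ⊕ ι) ⊕ κ) ((Unit ⊕ ι) ⊕ κ) ℝ) (x : (Unit ⊕ ι) ⊕ κ → ℝ)
    (a b : (Unit ⊕ ι) ⊕ κ) :
    (A₀ + ∑ i, x i • A i) a b = A₀ a b + x 𝐭 * A 𝐭 a b + ∑ j, x (𝐲 j) * A (𝐲 j) a b +
      ∑ k, x (𝐳 k) * A (𝐳 k) a b := by
  simp only [Matrix.add_apply, Matrix.sum_apply, Matrix.smul_apply, smul_eq_mul,
    Fintype.sum_sum_type, Fintype.sum_unique, PUnit.default_eq_unit]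
  ring

theorem parabola_identity_of_vecMul_eq_zero [Fintype ι] [Fintype κ]
    {A₀ : Matrix ((Unit ⊕ ι) ⊕ κ) ((Unit ⊕ ι) ⊕ κ) ℝ}
    {A : (Unit ⊕ ι) ⊕ κ → Matrix ((Unit ⊕ ι) ⊕ κ) ((Unit ⊕ ι) ⊕ κ) ℝ}
    (hgrad : ∀ x : (Unit ⊕ ι) ⊕ κ → ℝ, x 𝐭 = ∑ j, x (𝐲 j) ^ 2 →
      vecMul (Sum.elim (Sum.elim (fun _ => 1) fun j => -2 * x (𝐲 j)) fun _ => 0)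
        (A₀ + ∑ i, x i • A i) = 0)
    (b : (Unit ⊕ ι) ⊕ κ) (y : ι → ℝ) (z : κ → ℝ) :
    A₀ 𝐭 b + (∑ j, y j ^ 2) * A 𝐭 𝐭 b + ∑ j, y j * A (𝐲 j) 𝐭 b + ∑ k, z k * A (𝐳 k) 𝐭 b =
      2 * ∑ j, y j * (A₀ (𝐲 j) b + (∑ l, y l ^ 2) * A 𝐭 (𝐲 j) b +
        ∑ l, y l * A (𝐲 l) (𝐲 j) b + ∑ k, z k * A (𝐳 k) (𝐲 j) b) := by
  have h := congrFun (hgrad (Sum.elim (Sum.elim (fun _ => ∑ j, y j ^ 2) y) z) rfl) b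
  simp only [vecMul, dotProduct, affine_apply_coords] at h
  -- `default` becomes `()`, not `PUnit.unit`, so that the entries match the goal syntactically
  simp only [Fintype.sum_sum_type, Fintype.sum_unique, Sum.elim_inl, Sum.elim_inr, Pi.zero_apply,
    zero_mul, sum_const_zero, add_zero, show (default : Unit) = () from rfl, one_mul, neg_mul,
    mul_assoc, sum_neg_distrib, ← sub_eq_add_neg, sub_eq_zero] at h
  rwa [mul_sum]

variable [DecidableEq ι]

/-- Relations on the coefficients of `A₀ + ∑ xᵢ Aᵢ` forced by its symmetry and by `∇Φ(x) θ(x) = 0`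
on the parabola. A name `p_r` (or `p_r_c`) refers to the coefficient matrix of the coordinate `p`
(`const` for `A₀`, `t` for `x₁`) in row `r` (and column `c`). -/
structure ParabolaCoeffs (A₀ : Matrix ((Unit ⊕ ι) ⊕ κ) ((Unit ⊕ ι) ⊕ κ) ℝ)
    (A : (Unit ⊕ ι) ⊕ κ → Matrix ((Unit ⊕ ι) ⊕ κ) ((Unit ⊕ ι) ⊕ κ) ℝ) : Prop where
  isSymm_const : A₀.IsSymm
  isSymm : ∀ i, (A i).IsSymm
  const_t : ∀ b, A₀ 𝐭 b = 0
  z_t : ∀ k b, A (𝐳 k) 𝐭 b = 0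
  y_t : ∀ j b, A (𝐲 j) 𝐭 b = 2 * A₀ (𝐲 j) b
  t_y : ∀ j b, A 𝐭 (𝐲 j) b = 0
  z_y : ∀ k j b, A (𝐳 k) (𝐲 j) b = 0
  y_y : ∀ j l b, A (𝐲 l) (𝐲 j) b + A (𝐲 j) (𝐲 l) b = if j = l then A 𝐭 𝐭 b else 0

namespace ParabolaCoeffs

variable {A₀ : Matrix ((Unit ⊕ ι) ⊕ κ) ((Unit ⊕ ι) ⊕ κ) ℝ}
  {A : (Unit ⊕ ι) ⊕ κ → Matrix ((Unit ⊕ ι) ⊕ κ) ((Unit ⊕ ι) ⊕ κ) ℝ}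

theorem coeff_comm (h : ParabolaCoeffs A₀ A) (i a b : (Unit ⊕ ι) ⊕ κ) : A i a b = A i b a :=
  (h.isSymm i).apply b a

theorem const_y_t (h : ParabolaCoeffs A₀ A) (j : ι) : A₀ (𝐲 j) 𝐭 = 0 :=
  (h.isSymm_const.apply _ _).trans (h.const_t _)

theorem t_t_y (h : ParabolaCoeffs A₀ A) (j : ι) : A 𝐭 𝐭 (𝐲 j) = 0 :=
  (h.coeff_comm _ _ _).trans (h.t_y j 𝐭)

theorem const_y_y (h : ParabolaCoeffs A₀ A) (j l : ι) :
    A₀ (𝐲 j) (𝐲 l) = if j = l then A 𝐭 𝐭 𝐭 / 4 else 0 := by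
  have hyy := h.y_y j l 𝐭
  rw [h.coeff_comm, h.y_t, h.coeff_comm (𝐲 j), h.y_t, h.isSymm_const.apply (𝐲 j)] at hyy
  split_ifs at hyy ⊢ with hjl
  · subst hjl
    linarith
  · linarith

theorem y_y_antisymm (h : ParabolaCoeffs A₀ A) {a b : ι} (hab : a ≠ b) (c : (Unit ⊕ ι) ⊕ κ) :
    A (𝐲 a) (𝐲 b) c = -A (𝐲 b) (𝐲 a) c :=
  eq_neg_of_add_eq_zero_left <| by rw [h.y_y b a, if_neg hab.symm]

theorem y_y_diag (h : ParabolaCoeffs A₀ A) (j : ι) (c : (Unit ⊕ ι) ⊕ κ) :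
    A (𝐲 j) (𝐲 j) c = A 𝐭 𝐭 c / 2 := by
  have hjj := h.y_y j j c
  rw [if_pos rfl] at hjj
  linarith

theorem y_y_y (h : ParabolaCoeffs A₀ A) (i j l : ι) : A (𝐲 i) (𝐲 j) (𝐲 l) = 0 := by
  refine eq_zero_of_antisymm_of_symm (S := fun a b c => A (𝐲 a) (𝐲 b) (𝐲 c))
    (fun a b c => eq_neg_of_add_eq_zero_left ?_) (fun a b c => h.coeff_comm ..) i j l
  rw [h.y_y b a, h.t_t_y, ite_self]

variable [Fintype ι] [Fintype κ]

theorem of_gradient [DecidableEq κ]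
    (hsymm : ∀ x : (Unit ⊕ ι) ⊕ κ → ℝ, (A₀ + ∑ i, x i • A i).IsSymm)
    (hgrad : ∀ x : (Unit ⊕ ι) ⊕ κ → ℝ, x 𝐭 = ∑ j, x (𝐲 j) ^ 2 →
      vecMul (Sum.elim (Sum.elim (fun _ => 1) fun j => -2 * x (𝐲 j)) fun _ => 0)
        (A₀ + ∑ i, x i • A i) = 0) :
    ParabolaCoeffs A₀ A := by
  obtain ⟨hA₀, hA⟩ := isSymm_of_isSymm_affine hsymm
  have h := fun b => coeffs_eq_of_parabola_identity (parabola_identity_of_vecMul_eq_zero hgrad b)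
  simp only [forall_and] at h
  obtain ⟨h₀, hz, hy, hd, hf, he⟩ := h
  exact ⟨hA₀, hA, h₀, fun k b => hz b k, fun j b => hy b j, fun j b => hd b j,
    fun k j b => hf b k j, fun j l b => he b j l⟩

theorem isSymm_affine (h : ParabolaCoeffs A₀ A) (x : (Unit ⊕ ι) ⊕ κ → ℝ) :
    (A₀ + ∑ i, x i • A i).IsSymm :=
  IsSymm.ext fun a b => by
    simp only [Matrix.add_apply, Matrix.sum_apply, Matrix.smul_apply, h.isSymm_const.apply a b,
      h.coeff_comm _ b a]

theorem entry_t_t (h : ParabolaCoeffs A₀ A) (x : (Unit ⊕ ι) ⊕ κ → ℝ) :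
    (A₀ + ∑ i, x i • A i) 𝐭 𝐭 = x 𝐭 * A 𝐭 𝐭 𝐭 := by
  rw [affine_apply_coords]
  simp [h.const_t, h.z_t, h.y_t, h.const_y_t]

theorem entry_t_y (h : ParabolaCoeffs A₀ A) (x : (Unit ⊕ ι) ⊕ κ → ℝ) (l : ι) :
    (A₀ + ∑ i, x i • A i) 𝐭 (𝐲 l) = A 𝐭 𝐭 𝐭 / 4 * (2 * x (𝐲 l)) := by
  rw [affine_apply_coords]
  simp only [h.const_t, h.t_t_y, mul_zero, add_zero, h.y_t, h.const_y_y, mul_ite, sum_ite_eq',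
    mem_univ, ↓reduceIte, zero_add, h.z_t, sum_const_zero]
  ring

theorem entry_y_y (h : ParabolaCoeffs A₀ A) (x : (Unit ⊕ ι) ⊕ κ → ℝ) (j l : ι) :
    (A₀ + ∑ i, x i • A i) (𝐲 j) (𝐲 l) = if j = l then A 𝐭 𝐭 𝐭 / 4 else 0 := by
  rw [affine_apply_coords]
  simp [h.const_y_y, h.t_y, h.y_y_y, h.z_y]

theorem entry_t_z (h : ParabolaCoeffs A₀ A) (x : (Unit ⊕ ι) ⊕ κ → ℝ) (k : κ) :
    (A₀ + ∑ i, x i • A i) 𝐭 (𝐳 k) =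
      x 𝐭 * A 𝐭 𝐭 (𝐳 k) + ∑ j, 2 * x (𝐲 j) * A₀ (𝐲 j) (𝐳 k) := by
  rw [affine_apply_coords]
  simp only [h.const_t, zero_add, h.y_t, h.z_t, mul_zero, sum_const_zero, add_zero, add_right_inj]
  exact sum_congr rfl fun _ _ => by ring

theorem entry_y_z (h : ParabolaCoeffs A₀ A) (x : (Unit ⊕ ι) ⊕ κ → ℝ) (j : ι) (k : κ) :
    (A₀ + ∑ i, x i • A i) (𝐲 j) (𝐳 k) =
      A₀ (𝐲 j) (𝐳 k) + ∑ l, x (𝐲 l) * A (𝐲 l) (𝐲 j) (𝐳 k) := by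
  rw [affine_apply_coords]
  simp [h.t_y, h.z_y]

theorem t_t_t_nonneg (h : ParabolaCoeffs A₀ A)
    (hpsd : ∀ x : (Unit ⊕ ι) ⊕ κ → ℝ, ∑ j, x (𝐲 j) ^ 2 ≤ x 𝐭 → (A₀ + ∑ i, x i • A i).PosSemidef) :
    0 ≤ A 𝐭 𝐭 𝐭 := by
  have hx := (hpsd (Sum.elim (Sum.elim 1 0) 0) (by simp)).diag_nonneg (i := 𝐭)
  rw [h.entry_t_t] at hx
  simpa using hx

end ParabolaCoeffs

end Coordinates

namespace ParabolaCoeffs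

variable {n : ℕ} {κ : Type*} [Fintype κ]
  {A₀ : Matrix ((Unit ⊕ Fin n) ⊕ κ) ((Unit ⊕ Fin n) ⊕ κ) ℝ}
  {A : (Unit ⊕ Fin n) ⊕ κ → Matrix ((Unit ⊕ Fin n) ⊕ κ) ((Unit ⊕ Fin n) ⊕ κ) ℝ}

theorem toBlocks₁₁_eq (h : ParabolaCoeffs A₀ A) (x : (Unit ⊕ Fin n) ⊕ κ → ℝ) :
    (A₀ + ∑ i, x i • A i).toBlocks₁₁ = (A 𝐭 𝐭 𝐭 / 4) • zetaMat n (x 𝐭) fun j => x (𝐲 j) := by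
  ext r s
  rcases r with ⟨⟨⟩⟩ | j <;> rcases s with ⟨⟨⟩⟩ | l <;>
    simp only [toBlocks₁₁, zetaMat, of_apply, Matrix.smul_apply, smul_eq_mul]
  · rw [h.entry_t_t]
    ring
  · rw [h.entry_t_y]
  · rw [(h.isSymm_affine x).apply, h.entry_t_y]
  · rw [h.entry_y_y, mul_ite, mul_one, mul_zero]

theorem exists_toBlocks₁₂_eq (h : ParabolaCoeffs A₀ A) :
    ∃ (A₁ : Matrix (Unit ⊕ Fin n) κ ℝ) (A₂ : Matrix {ij : Fin n × Fin n // ij.1 < ij.2} κ ℝ),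
      ∀ x : (Unit ⊕ Fin n) ⊕ κ → ℝ, (A₀ + ∑ i, x i • A i).toBlocks₁₂ =
        zetaMat n (x 𝐭) (fun j => x (𝐲 j)) * A₁ + etaMat n (fun j => x (𝐲 j)) * A₂ := by
  -- `A₂` collects the off-diagonal, antisymmetric part of the `y`-coefficients in the `z`-columns
  refine ⟨of fun r k => Sum.elim (fun _ => A 𝐭 𝐭 (𝐳 k) / 4) (fun j => A₀ (𝐲 j) (𝐳 k)) r,
    of fun p k => A (𝐲 p.1.2) (𝐲 p.1.1) (𝐳 k), fun x => ?_⟩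
  ext r k
  rcases r with ⟨⟨⟩⟩ | j <;> simp only [toBlocks₁₂, of_apply]
  · rw [h.entry_t_z, Matrix.add_apply, zetaMat_mul_apply_inl, etaMat_mul_apply_inl]
    simp only [of_apply, Sum.elim_inl, Sum.elim_inr]
    ring
  · rw [h.entry_y_z, Matrix.add_apply, zetaMat_mul_apply_inr,
      etaMat_mul_apply_inr _ (fun a b k => A (𝐲 a) (𝐲 b) (𝐳 k)) fun a b k hab => h.y_y_antisymm hab _]
    simp only [of_apply, Sum.elim_inl, Sum.elim_inr, h.y_y_diag]
    ring

end ParabolaCoeffs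

theorem stmt11_general (n m : ℕ)
    (θ : (((Unit ⊕ Fin n) ⊕ Fin m) → ℝ) →
      Matrix ((Unit ⊕ Fin n) ⊕ Fin m) ((Unit ⊕ Fin n) ⊕ Fin m) ℝ)
    (A0 : Matrix ((Unit ⊕ Fin n) ⊕ Fin m) ((Unit ⊕ Fin n) ⊕ Fin m) ℝ)
    (A : ((Unit ⊕ Fin n) ⊕ Fin m) →
      Matrix ((Unit ⊕ Fin n) ⊕ Fin m) ((Unit ⊕ Fin n) ⊕ Fin m) ℝ)
    (haff : ∀ x, θ x = A0 + ∑ i, x i • A i)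
    (hsymm : ∀ x, (θ x).IsSymm)
    (hpsd : ∀ x : ((Unit ⊕ Fin n) ⊕ Fin m) → ℝ,
      ∑ j, (x (Sum.inl (Sum.inr j))) ^ 2 ≤ x (Sum.inl (Sum.inl ())) → (θ x).PosSemidef)
    (hgrad : ∀ x : ((Unit ⊕ Fin n) ⊕ Fin m) → ℝ,
      x (Sum.inl (Sum.inl ())) = ∑ j, (x (Sum.inl (Sum.inr j))) ^ 2 →
      Matrix.vecMul
        (Sum.elim (Sum.elim (fun _ => (1 : ℝ)) fun j => -2 * x (Sum.inl (Sum.inr j)))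
          fun _ => 0) (θ x) = 0) :
    ∃ (c : ℝ) (_ : 0 ≤ c) (A1 : Matrix (Unit ⊕ Fin n) (Fin m) ℝ)
      (A2 : Matrix {ij : Fin n × Fin n // ij.1 < ij.2} (Fin m) ℝ),
      ∀ x : ((Unit ⊕ Fin n) ⊕ Fin m) → ℝ,
        (θ x).toBlocks₁₁ =
          c • zetaMat n (x (Sum.inl (Sum.inl ()))) (fun j => x (Sum.inl (Sum.inr j))) ∧
        (θ x).toBlocks₁₂ =
          zetaMat n (x (Sum.inl (Sum.inl ()))) (fun j => x (Sum.inl (Sum.inr j))) * A1 +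
            etaMat n (fun j => x (Sum.inl (Sum.inr j))) * A2 := by
  obtain rfl : θ = fun x => A0 + ∑ i, x i • A i := funext haff
  have hA : ParabolaCoeffs A0 A := .of_gradient hsymm hgrad
  obtain ⟨A1, A2, hblock₁₂⟩ := hA.exists_toBlocks₁₂_eq
  exact ⟨A 𝐭 𝐭 𝐭 / 4, div_nonneg (hA.t_t_t_nonneg hpsd) zero_le_four, A1, A2,
    fun x => ⟨hA.toBlocks₁₁_eq x, hblock₁₂ x⟩⟩

/-- Let `Φ(x) = x₁ - ∑ᵢ yᵢ²` and let `θ` be an affine symmetric-matrix-valued function,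
positive semi-definite on `{Φ ≥ 0}`, with `∇Φ(x) θ(x) = 0` on the parabola `{Φ = 0}`.
Then the upper-left `q×q` block of `θ` is `c ζ` for some `c ≥ 0` and the upper-right
block is `ζ A₁ + η A₂` for some constant matrices `A₁, A₂`.
Coordinates: `x = (x₁, y, z)` indexed by `(Unit ⊕ Fin n) ⊕ Fin m`, `q = n + 1 > 1`. -/
theorem stmt11 (n m : ℕ) (hn : 1 ≤ n)
    (θ : (((Unit ⊕ Fin n) ⊕ Fin m) → ℝ) →
      Matrix ((Unit ⊕ Fin n) ⊕ Fin m) ((Unit ⊕ Fin n) ⊕ Fin m) ℝ)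
    (A0 : Matrix ((Unit ⊕ Fin n) ⊕ Fin m) ((Unit ⊕ Fin n) ⊕ Fin m) ℝ)
    (A : ((Unit ⊕ Fin n) ⊕ Fin m) →
      Matrix ((Unit ⊕ Fin n) ⊕ Fin m) ((Unit ⊕ Fin n) ⊕ Fin m) ℝ)
    (haff : ∀ x, θ x = A0 + ∑ i, x i • A i)
    (hsymm : ∀ x, (θ x).IsSymm)
    (hpsd : ∀ x : ((Unit ⊕ Fin n) ⊕ Fin m) → ℝ,
      ∑ j, (x (Sum.inl (Sum.inr j))) ^ 2 ≤ x (Sum.inl (Sum.inl ())) → (θ x).PosSemidef)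
    (hgrad : ∀ x : ((Unit ⊕ Fin n) ⊕ Fin m) → ℝ,
      x (Sum.inl (Sum.inl ())) = ∑ j, (x (Sum.inl (Sum.inr j))) ^ 2 →
      Matrix.vecMul
        (Sum.elim (Sum.elim (fun _ => (1 : ℝ)) fun j => -2 * x (Sum.inl (Sum.inr j)))
          fun _ => 0) (θ x) = 0) :
    ∃ (c : ℝ) (_ : 0 ≤ c) (A1 : Matrix (Unit ⊕ Fin n) (Fin m) ℝ)
      (A2 : Matrix {ij : Fin n × Fin n // ij.1 < ij.2} (Fin m) ℝ),
      ∀ x : ((Unit ⊕ Fin n) ⊕ Fin m) → ℝ,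
        (θ x).toBlocks₁₁ =
          c • zetaMat n (x (Sum.inl (Sum.inl ()))) (fun j => x (Sum.inl (Sum.inr j))) ∧
        (θ x).toBlocks₁₂ =
          zetaMat n (x (Sum.inl (Sum.inl ()))) (fun j => x (Sum.inl (Sum.inr j))) * A1 +
            etaMat n (fun j => x (Sum.inl (Sum.inr j))) * A2 :=
  stmt11_general n m θ A0 A haff hsymm hpsd hgrad
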